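/- arXiv:math/0611020 — 2 statements merged into one kernel-verified Lean document; each statement's English description precedes it below -/
import Mathlib

section
/- Let S = K[x_1,...,x_n]. If I is a stable monomial ideal with minimal generators u_1,...,u_t, then as a graded K-vector space, I = ⊕_{k=1}^{t} u_k · K[x_{max(u_k)}, ..., x_n]. -/
set_option synthInstance.maxHeartbeats 1000000
set_option maxHeartbeats 1000000

open MvPolynomial

namespace Paper

/-! ### Combinatorics of monomials -/

/-- a monomial in `n` variables, encoded by its exponent vector -/
abbrev Mono (n : ℕ) := Fin n →₀ ℕ

/-- total degree of a monomial -/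
def mdeg {n : ℕ} (u : Mono n) : ℕ := u.sum fun _ e => e

/-- `maxVar u` is the largest index (1-indexed) of a variable dividing `u`; `maxVar 1 = 0`. -/
def maxVar {n : ℕ} (u : Mono n) : ℕ := u.support.sup fun i => (i : ℕ) + 1

/-- `LexGT u v` : `u >_lex v` (lexicographic order with `x_1 > x_2 > ⋯ > x_n`). -/
def LexGT {n : ℕ} (u v : Mono n) : Prop :=
  ∃ i : Fin n, v i < u i ∧ ∀ j : Fin n, j < i → u j = v j

/-- strongly stable set of monomials -/
def SStableSet {n : ℕ} (V : Set (Mono n)) : Prop :=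
  ∀ u : Mono n, ∀ p q : Fin n, p < q → u + Finsupp.single q 1 ∈ V →
    u + Finsupp.single p 1 ∈ V

/-- `Dk V k = { u / x_k : u ∈ V, max(u) = k }` (here `k : Fin n` is the 0-indexed variable,
corresponding to the 1-indexed variable `k+1`) -/
def Dk {n : ℕ} (V : Set (Mono n)) (k : Fin n) : Set (Mono n) :=
  {w | w + Finsupp.single k 1 ∈ V ∧ maxVar (w + Finsupp.single k 1) = (k : ℕ) + 1}

/-- `Mle j W = { u ∈ W : max(u) ≤ j }` -/
def Mle {n : ℕ} (j : ℕ) (W : Set (Mono n)) : Set (Mono n) := {u ∈ W | maxVar u ≤ j}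

/-- `L` is a lexsegment set of monomials inside `K[x_1,…,x_k]`. -/
def LexSegIn {n : ℕ} (k : ℕ) (L : Set (Mono n)) : Prop :=
  (∀ u ∈ L, maxVar u ≤ k) ∧
  ∀ u ∈ L, ∀ v : Mono n, mdeg v = mdeg u → maxVar v ≤ k → LexGT v u → v ∈ L

/-- `V` is a `d`-linear lexsegment set of monomials of degree `d`. -/
def DLinearLexSeg {n : ℕ} (d : ℕ) (V : Set (Mono n)) : Prop :=
  (∀ u ∈ V, mdeg u = d) ∧ SStableSet V ∧
    ∀ k : Fin n, LexSegIn ((k : ℕ) + 1) (Dk V k)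

/-! ### Ideal-level notions -/

variable {n : ℕ} {K : Type} [Field K]

/-- `I` is a monomial ideal. -/
def MonomialIdeal (I : Ideal (MvPolynomial (Fin n) K)) : Prop :=
  ∀ p ∈ I, ∀ m ∈ p.support, (monomial m (1 : K)) ∈ I

/-- `u` is a minimal monomial generator of the monomial ideal `I`. -/
def MinGen (I : Ideal (MvPolynomial (Fin n) K)) (u : Mono n) : Prop :=
  monomial u (1 : K) ∈ I ∧ ∀ v : Mono n, v ≤ u → v ≠ u → monomial v (1 : K) ∉ I

/-- stable monomial ideal -/
def StableIdeal (I : Ideal (MvPolynomial (Fin n) K)) : Prop :=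
  MonomialIdeal I ∧
  ∀ u : Mono n, ∀ q : Fin n, maxVar u = (q : ℕ) + 1 → monomial u (1 : K) ∈ I →
    ∀ p : Fin n, p < q →
      monomial (u - Finsupp.single q 1 + Finsupp.single p 1) (1 : K) ∈ I

/-- strongly stable monomial ideal -/
def SStableIdeal (I : Ideal (MvPolynomial (Fin n) K)) : Prop :=
  MonomialIdeal I ∧
  ∀ u : Mono n, ∀ q : Fin n, 0 < u q → monomial u (1 : K) ∈ I →
    ∀ p : Fin n, p < q →
      monomial (u - Finsupp.single q 1 + Finsupp.single p 1) (1 : K) ∈ I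

/-- the set of (exponent vectors of) monomials of degree `k` lying in `I` -/
def monSlice (I : Ideal (MvPolynomial (Fin n) K)) (k : ℕ) : Set (Mono n) :=
  {u | mdeg u = k ∧ monomial u (1 : K) ∈ I}

/-- homogeneous (graded) ideal -/
def HomIdeal (I : Ideal (MvPolynomial (Fin n) K)) : Prop :=
  ∀ p ∈ I, ∀ k : ℕ, homogeneousComponent k p ∈ I

/-! ### Graded components and Hilbert functions -/

/-- the degree-`z` homogeneous component of `I`, as a `K`-subspace -/
noncomputable def hComp (I : Ideal (MvPolynomial (Fin n) K)) (z : ℤ) :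
    Submodule K (MvPolynomial (Fin n) K) :=
  if 0 ≤ z then
    (Submodule.restrictScalars K I) ⊓ homogeneousSubmodule (Fin n) K z.toNat
  else ⊥

/-- Hilbert function `H(I,t)` of the ideal `I` -/
noncomputable def hfI (I : Ideal (MvPolynomial (Fin n) K)) (t : ℕ) : ℕ :=
  Module.finrank K (hComp I (t : ℤ))

/-- Hilbert function `H(S/I,t)` of the quotient `S/I` -/
noncomputable def hfQ (I : Ideal (MvPolynomial (Fin n) K)) (t : ℕ) : ℕ :=
  Module.finrank K
    (homogeneousSubmodule (Fin n) K t ⧸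
      Submodule.comap (homogeneousSubmodule (Fin n) K t).subtype
        (Submodule.restrictScalars K I))

/-- the `K`-subspace `u · K[x_{max(u)},…,x_n]` of the polynomial ring -/
noncomputable def tailSubmodule (K : Type) [Field K] {n : ℕ} (u : Mono n) :
    Submodule K (MvPolynomial (Fin n) K) :=
  Submodule.span K
    {p | ∃ w : Mono n, (∀ i ∈ w.support, maxVar u ≤ (i : ℕ) + 1) ∧
        p = monomial (u + w) (1 : K)}

/-! ### auxiliary lemmas -/

lemma le_maxVar {u : Mono n} {i : Fin n} (h : i ∈ u.support) : (i:ℕ)+1 ≤ maxVar u := by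
  unfold maxVar; exact Finset.le_sup (f := fun i : Fin n => (i:ℕ)+1) h

lemma exists_maxVar {u : Mono n} (h : u ≠ 0) : ∃ q : Fin n, q ∈ u.support ∧ maxVar u = (q:ℕ)+1 := by
  obtain ⟨q, hq, he⟩ := u.support.exists_mem_eq_sup (Finsupp.support_nonempty_iff.2 h)
    (fun i => (i:ℕ)+1)
  exact ⟨q, hq, he⟩

lemma mdeg_eq_sum (u : Mono n) : mdeg u = ∑ i, u i := Finsupp.sum_fintype _ _ (fun _ => rfl)

lemma mdeg_lt {u v : Mono n} (h : u ≤ v) (hne : u ≠ v) : mdeg u < mdeg v := by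
  rw [mdeg_eq_sum, mdeg_eq_sum]
  have h' : ∀ i, u i ≤ v i := Finsupp.le_def.1 h
  have : ∃ i, u i ≠ v i := by
    by_contra hc
    push_neg at hc
    exact hne (Finsupp.ext hc)
  obtain ⟨i, hi⟩ := this
  exact Finset.sum_lt_sum (fun i _ => h' i) ⟨i, Finset.mem_univ i, lt_of_le_of_ne (h' i) hi⟩

lemma exists_minGen_le {I : Ideal (MvPolynomial (Fin n) K)} :
    ∀ N v, mdeg v ≤ N → monomial v (1:K) ∈ I → ∃ u, MinGen I u ∧ u ≤ v := by
  intro N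
  induction N with
  | zero =>
    intro v hv hm
    refine ⟨v, ⟨hm, fun w hw hne hwI => ?_⟩, le_rfl⟩
    exact absurd (mdeg_lt hw hne) (by omega)
  | succ N ih =>
    intro v hv hm
    by_cases hmin : ∀ w : Mono n, w ≤ v → w ≠ v → monomial w (1:K) ∉ I
    · exact ⟨v, ⟨hm, hmin⟩, le_rfl⟩
    · push_neg at hmin
      obtain ⟨w, hw, hne, hwI⟩ := hmin
      obtain ⟨u, hu, huw⟩ := ih w (by have := mdeg_lt hw hne; omega) hwI
      exact ⟨u, hu, huw.trans hw⟩

lemma eq_of_le_minGen {I : Ideal (MvPolynomial (Fin n) K)} {u u' : Mono n}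
    (h : u ≤ u') (hu : monomial u (1:K) ∈ I) (hu' : MinGen I u') : u = u' := by
  by_contra hne
  exact hu'.2 u h hne hu

/-- the weight used for termination of the EK rewriting process -/
def wt {n : ℕ} (u : Mono n) : ℕ := ∑ i : Fin n, u i * (i : ℕ)

lemma wt_mono {u v : Mono n} (h : u ≤ v) : wt u ≤ wt v :=
  Finset.sum_le_sum (fun i _ => Nat.mul_le_mul_right _ (Finsupp.le_def.1 h i))

lemma wt_add (a b : Mono n) : wt (a+b) = wt a + wt b := by
  simp [wt, Finsupp.add_apply, add_mul, Finset.sum_add_distrib]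

lemma wt_single (q : Fin n) : wt (Finsupp.single q 1) = (q:ℕ) := by
  simp [wt, Finsupp.single_apply, ite_mul]

/-- Existence of the Eliahou–Kervaire factorization. -/
lemma EK_exists {I : Ideal (MvPolynomial (Fin n) K)} (hI : StableIdeal I) :
    ∀ N (v w : Mono n), wt v ≤ N → monomial v (1:K) ∈ I →
      ∃ u w', MinGen I u ∧ (∀ i : Fin n, i ∈ w'.support → maxVar u ≤ (i:ℕ)+1) ∧ u + w' = v + w := by
  intro N
  induction N with
  | zero =>
    intro v w hwt hv
    -- wt v = 0 : handled by the general step below; just do the same argument,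
    -- noting any swap would strictly decrease wt, impossible at 0.
    obtain ⟨u, hu, huv⟩ := exists_minGen_le (mdeg v) v le_rfl hv
    set w0 : Mono n := (v - u) + w with hw0
    have hsum : u + w0 = v + w := by
      ext i
      have := Finsupp.le_def.1 huv i
      simp only [Finsupp.add_apply, Finsupp.tsub_apply, hw0]
      omega
    by_cases hc : ∀ i : Fin n, i ∈ w0.support → maxVar u ≤ (i:ℕ)+1
    · exact ⟨u, w0, hu, hc, hsum⟩
    · push_neg at hc
      obtain ⟨j, hj, hjlt⟩ := hc
      exfalso
      have hune : u ≠ 0 := by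
        intro h0
        rw [h0] at hjlt
        simp [maxVar] at hjlt
      obtain ⟨q, hq, hqe⟩ := exists_maxVar hune
      have : wt u = 0 := by
        have := wt_mono huv
        omega
      have hq0 : (q:ℕ) = 0 := by
        have hqpos := Finsupp.mem_support_iff.1 hq
        by_contra h
        have : u q * (q:ℕ) ≠ 0 := by positivity
        have hle : u q * (q:ℕ) ≤ wt u :=
          Finset.single_le_sum (f := fun i => u i * (i:ℕ)) (fun _ _ => Nat.zero_le _)
            (Finset.mem_univ q)
        omega
      rw [hqe, hq0] at hjlt
      omega
  | succ N ih =>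
    intro v w hwt hv
    obtain ⟨u, hu, huv⟩ := exists_minGen_le (mdeg v) v le_rfl hv
    set w0 : Mono n := (v - u) + w with hw0
    have hsum : u + w0 = v + w := by
      ext i
      have := Finsupp.le_def.1 huv i
      simp only [Finsupp.add_apply, Finsupp.tsub_apply, hw0]
      omega
    by_cases hc : ∀ i : Fin n, i ∈ w0.support → maxVar u ≤ (i:ℕ)+1
    · exact ⟨u, w0, hu, hc, hsum⟩
    · push_neg at hc
      obtain ⟨j, hj, hjlt⟩ := hc
      have hune : u ≠ 0 := by
        intro h0
        rw [h0] at hjlt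
        simp [maxVar] at hjlt
      obtain ⟨q, hq, hqe⟩ := exists_maxVar hune
      have hjq : j < q := by
        rw [hqe] at hjlt
        exact_mod_cast Fin.lt_def.2 (by omega)
      -- swap
      have hv' : monomial (u - Finsupp.single q 1 + Finsupp.single j 1) (1:K) ∈ I :=
        hI.2 u q hqe hu.1 j hjq
      set u' : Mono n := u - Finsupp.single q 1 + Finsupp.single j 1 with hu'def
      set w' : Mono n := w0 - Finsupp.single j 1 + Finsupp.single q 1 with hw'def
      have huq : 1 ≤ u q := Nat.one_le_iff_ne_zero.2 (Finsupp.mem_support_iff.1 hq)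
      have hw0j : 1 ≤ w0 j := Nat.one_le_iff_ne_zero.2 (Finsupp.mem_support_iff.1 hj)
      have hjqne : j ≠ q := ne_of_lt hjq
      have hsum' : u' + w' = v + w := by
        rw [← hsum]
        ext i
        simp only [Finsupp.add_apply, Finsupp.tsub_apply, Finsupp.single_apply, hu'def, hw'def]
        by_cases h1 : q = i <;> by_cases h2 : j = i <;>
          simp_all <;> omega
      have hwt' : wt u' ≤ N := by
        have h1 : wt u' + (q:ℕ) = wt u + (j:ℕ) := by
          have heq : u' + Finsupp.single q 1 = u + Finsupp.single j 1 := by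
            ext i
            simp only [Finsupp.add_apply, Finsupp.tsub_apply, Finsupp.single_apply, hu'def]
            by_cases h1 : q = i <;> by_cases h2 : j = i <;> simp_all <;> omega
          have h2 : wt u' + wt (Finsupp.single q (1:ℕ)) = wt u + wt (Finsupp.single j (1:ℕ)) := by
            rw [← wt_add, ← wt_add, heq]
          rwa [wt_single, wt_single] at h2
        have h2 : wt u ≤ wt v := wt_mono huv
        have : (j:ℕ) < (q:ℕ) := hjq
        omega
      obtain ⟨U, W, hU, hW, hUW⟩ := ih u' w' hwt' hv'
      exact ⟨U, W, hU, hW, by rw [hUW, hsum']⟩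


lemma EK_unique {I : Ideal (MvPolynomial (Fin n) K)} {u u' w w' : Mono n}
    (hu : MinGen I u) (hu' : MinGen I u')
    (hw : ∀ i : Fin n, i ∈ w.support → maxVar u ≤ (i:ℕ)+1)
    (hw' : ∀ i : Fin n, i ∈ w'.support → maxVar u' ≤ (i:ℕ)+1)
    (h : u + w = u' + w') : u = u' := by
  have ha : ∀ i, u i + w i = u' i + w' i := by
    intro i
    have := congrArg (fun f : Mono n => f i) h
    simpa using this
  have hwz : ∀ i : Fin n, (i:ℕ)+1 < maxVar u → w i = 0 := by
    intro i hi
    by_contra hne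
    exact absurd (hw i (Finsupp.mem_support_iff.2 hne)) (by omega)
  have hwz' : ∀ i : Fin n, (i:ℕ)+1 < maxVar u' → w' i = 0 := by
    intro i hi
    by_contra hne
    exact absurd (hw' i (Finsupp.mem_support_iff.2 hne)) (by omega)
  have huz : ∀ i : Fin n, maxVar u < (i:ℕ)+1 → u i = 0 := by
    intro i hi
    by_contra hne
    exact absurd (le_maxVar (Finsupp.mem_support_iff.2 hne)) (by omega)
  have huz' : ∀ i : Fin n, maxVar u' < (i:ℕ)+1 → u' i = 0 := by
    intro i hi
    by_contra hne
    exact absurd (le_maxVar (Finsupp.mem_support_iff.2 hne)) (by omega)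
  rcases lt_trichotomy (maxVar u) (maxVar u') with hlt | heq | hgt
  · refine eq_of_le_minGen (Finsupp.le_def.2 fun i => ?_) hu.1 hu'
    rcases lt_or_ge ((i:ℕ)+1) (maxVar u') with h1 | h1
    · have := hwz' i h1
      have := ha i
      omega
    · have := huz i (by omega)
      omega
  · by_cases hb : u ≤ u'
    · exact eq_of_le_minGen hb hu.1 hu'
    · have hb' : ∃ i, u' i < u i := by
        by_contra hc
        push_neg at hc
        exact hb (Finsupp.le_def.2 fun i => le_of_not_gt (fun hh => absurd (hc i) (by omega)))
      obtain ⟨i₀, hi₀⟩ := hb'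
      have hi₀M : (i₀:ℕ)+1 = maxVar u := by
        rcases lt_trichotomy ((i₀:ℕ)+1) (maxVar u) with h1 | h1 | h1
        · have := hwz i₀ h1
          have := hwz' i₀ (by omega)
          have := ha i₀
          omega
        · exact h1
        · have := huz i₀ h1
          omega
      refine (eq_of_le_minGen (Finsupp.le_def.2 fun i => ?_) hu'.1 hu).symm
      rcases lt_trichotomy ((i:ℕ)+1) (maxVar u) with h1 | h1 | h1
      · have := hwz i h1
        have := hwz' i (by omega)
        have := ha i
        omega
      · have : i = i₀ := Fin.ext (by omega)
        subst this
        omega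
      · have := huz' i (by omega)
        omega
  · refine (eq_of_le_minGen (Finsupp.le_def.2 fun i => ?_) hu'.1 hu).symm
    rcases lt_or_ge ((i:ℕ)+1) (maxVar u) with h1 | h1
    · have := hwz i h1
      have := ha i
      omega
    · have := huz' i (by omega)
      omega

/-- the set of exponent vectors in the EK block of `u` -/
def Sset {n : ℕ} (u : Mono n) : Set (Mono n) :=
  {m | ∃ w : Mono n, (∀ i : Fin n, i ∈ w.support → maxVar u ≤ (i:ℕ)+1) ∧ m = u + w}

lemma Sset_disj {I : Ideal (MvPolynomial (Fin n) K)} {u u' : Mono n}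
    (hu : MinGen I u) (hu' : MinGen I u') (hne : u ≠ u') {m : Mono n}
    (h : m ∈ Sset u) (h' : m ∈ Sset u') : False := by
  obtain ⟨w, hw, rfl⟩ := h
  obtain ⟨w', hw', he⟩ := h'
  exact hne (EK_unique hu hu' hw hw' he)

/-- polynomials supported inside `S` -/
def suppIn (K : Type) [Field K] {n : ℕ} (S : Set (Mono n)) :
    Submodule K (MvPolynomial (Fin n) K) where
  carrier := {p | ∀ m ∈ p.support, m ∈ S}
  add_mem' := by
    intro p q hp hq m hm
    rcases Finset.mem_union.1 (MvPolynomial.support_add hm) with h | h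
    · exact hp m h
    · exact hq m h
  zero_mem' := by simp
  smul_mem' := by
    intro c p hp m hm
    exact hp m (MvPolynomial.support_smul hm)

lemma tail_le_suppIn (u : Mono n) : tailSubmodule K u ≤ suppIn K (Sset u) := by
  rw [tailSubmodule, Submodule.span_le]
  rintro p ⟨w, hw, rfl⟩
  intro m hm
  classical
  rw [support_monomial, if_neg one_ne_zero, Finset.mem_singleton] at hm
  exact hm ▸ ⟨w, fun i hi => hw i hi, rfl⟩

lemma suppIn_mono {S T : Set (Mono n)} (h : S ⊆ T) : suppIn K S ≤ suppIn K T :=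
  fun _ hp m hm => h (hp m hm)



/-- Eliahou–Kervaire decomposition of a stable ideal:
`I = ⨁_{k=1}^{t} u_k · K[x_{max(u_k)},…,x_n]` as a graded `K`-vector space. -/
theorem stmt4 (n : ℕ) (K : Type) [Field K] (I : Ideal (MvPolynomial (Fin n) K))
    (hI : StableIdeal I) (G : Finset (Mono n)) (hG : ∀ u, u ∈ G ↔ MinGen I u) :
    (⨆ u ∈ G, tailSubmodule K u) = Submodule.restrictScalars K I ∧
    iSupIndep fun u : G => tailSubmodule K (u : Mono n) := by
  constructor
  · apply le_antisymm
    · refine iSup₂_le fun u huG => ?_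
      rw [tailSubmodule, Submodule.span_le]
      rintro p ⟨w, hw, rfl⟩
      have hu : MinGen I u := (hG u).1 huG
      have hmul : (monomial (u+w) (1:K)) = monomial w 1 * monomial u 1 := by
        rw [monomial_mul, one_mul, add_comm]
      show monomial (u+w) (1:K) ∈ Submodule.restrictScalars K I
      rw [Submodule.restrictScalars_mem, hmul]
      exact I.mul_mem_left _ hu.1
    · intro p hp
      rw [Submodule.restrictScalars_mem] at hp
      rw [p.as_sum]
      apply Submodule.sum_mem
      intro m hm
      have hmono : monomial m (1:K) ∈ I := hI.1 p hp m hm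
      obtain ⟨u, w', hu, hw', hsum⟩ := EK_exists hI (wt m) m 0 le_rfl hmono
      have hm' : m = u + w' := by rw [hsum, add_zero]
      have hmem : monomial m (1:K) ∈ tailSubmodule K u :=
        Submodule.subset_span ⟨w', fun i hi => hw' i hi, by rw [hm']⟩
      have hle : tailSubmodule K u ≤ ⨆ u ∈ G, tailSubmodule K u :=
        le_iSup₂ (f := fun (u : Mono n) (_ : u ∈ G) => tailSubmodule K u) u ((hG u).2 hu)
      have hsm : monomial m (coeff m p) = coeff m p • monomial m (1:K) := by
        rw [smul_monomial, smul_eq_mul, mul_one]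
      rw [hsm]
      exact Submodule.smul_mem _ _ (hle hmem)
  · intro u
    have h1 : tailSubmodule K (u:Mono n) ≤ suppIn K (Sset (u:Mono n)) := tail_le_suppIn _
    have h2 : (⨆ v : G, ⨆ _ : v ≠ u, tailSubmodule K (v:Mono n)) ≤
        suppIn K {m | ∃ v : G, v ≠ u ∧ m ∈ Sset (v:Mono n)} := by
      refine iSup₂_le fun v hv => (tail_le_suppIn _).trans (suppIn_mono ?_)
      intro m hm
      exact ⟨v, hv, hm⟩
    rw [Submodule.disjoint_def]
    intro p hpu hprest
    by_contra hne
    have hsupp : p.support.Nonempty :=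
      Finset.nonempty_iff_ne_empty.2 (fun h => hne (support_eq_empty.1 h))
    obtain ⟨m, hm⟩ := hsupp
    obtain ⟨v, hvne, hmv⟩ := h2 hprest m hm
    exact Sset_disj ((hG _).1 u.2) ((hG _).1 v.2)
      (fun he => hvne (Subtype.ext he.symm)) (h1 hpu m hm) hmv


end Paper
end

section
/- If I and J are d-lexsegment monomial ideals in S = K[x_1,...,x_n] with the same Hilbert function, then I = J. -/
set_option synthInstance.maxHeartbeats 1000000
set_option maxHeartbeats 1000000

open MvPolynomial

namespace Paper

/-! ### Ideal-level notions -/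

variable {n : ℕ} {K : Type} [Field K]

/-- lexsegment ideal -/
def LexIdeal (I : Ideal (MvPolynomial (Fin n) K)) : Prop :=
  MonomialIdeal I ∧ ∀ k : ℕ, LexSegIn n (monSlice I k)

/-- `d`-lexsegment ideal: `I_{≥d}` is generated by a `d`-linear lexsegment set of monomials
of degree `d`, and `I_k` is lexsegment for all `k < d`. -/
def DLexIdeal (d : ℕ) (I : Ideal (MvPolynomial (Fin n) K)) : Prop :=
  MonomialIdeal I ∧
  DLinearLexSeg d (monSlice I d) ∧
  (∀ u : Mono n, d ≤ mdeg u → monomial u (1 : K) ∈ I → ∃ v ∈ monSlice I d, v ≤ u) ∧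
  (∀ k : ℕ, k < d → LexSegIn n (monSlice I k))

/-!
The Hilbert function of a monomial ideal counts its monomials degree by degree, and a lexsegment
set of monomials of fixed degree is determined by its size; this settles the degrees below `d`.
Since `I_d` is strongly stable, every monomial of `I` of degree `d + s` factors uniquely as
`v * z` with `v ∈ I_d` and `max(v) ≤ min(z)` (Eliahou–Kervaire), so
`H(I, d + s) = ∑ᵢ mᵢ * multichoose (n - i) s` with `mᵢ = |D_i(I_d)|`. These functions of `s` are
linearly independent, so `H(I, -)` determines every `mᵢ`; each `D_i(I_d)` is a lexsegment, hence
determined by `mᵢ`, the sets `D_i(I_d)` recover `I_d`, and `I_d` generates `I` in degrees `≥ d`.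
-/

lemma mdeg_eq_degree (u : Mono n) : mdeg u = u.degree := rfl

lemma mdeg_add (u v : Mono n) : mdeg (u + v) = mdeg u + mdeg v := map_add Finsupp.degree u v

lemma mdeg_single (i : Fin n) (k : ℕ) : mdeg (Finsupp.single i k) = k :=
  Finsupp.degree_single i k

lemma mdeg_le_mdeg {u v : Mono n} (h : u ≤ v) : mdeg u ≤ mdeg v := by
  obtain ⟨w, rfl⟩ := exists_add_of_le h
  rw [mdeg_add]
  exact Nat.le_add_right _ _

lemma finite_of_forall_mdeg_eq {t : ℕ} {S : Set (Mono n)} (hS : ∀ u ∈ S, mdeg u = t) :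
    S.Finite :=
  (Finsupp.finite_of_degree_eq t).subset hS

lemma maxVar_eq_iff {u : Mono n} {i : Fin n} :
    maxVar u = (i : ℕ) + 1 ↔ i ∈ u.support ∧ ∀ j ∈ u.support, j ≤ i := by
  constructor
  · intro h
    obtain ⟨b, hb, hsup⟩ := Finset.exists_mem_eq_sup u.support
      (Finset.nonempty_iff_ne_empty.mpr fun he => by simp [maxVar, he] at h)
      (fun j : Fin n => (j : ℕ) + 1)
    have hbi : b = i := Fin.ext (by simp only [maxVar] at h; omega)
    refine ⟨hbi ▸ hb, fun j hj => Fin.le_def.mpr ?_⟩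
    have : (j : ℕ) + 1 ≤ maxVar u := Finset.le_sup (f := fun j : Fin n => (j : ℕ) + 1) hj
    omega
  · rintro ⟨hi, hle⟩
    refine le_antisymm (Finset.sup_le fun j hj => ?_) ?_
    · simpa using Fin.le_def.mp (hle j hj)
    · exact Finset.le_sup (f := fun j : Fin n => (j : ℕ) + 1) hi

lemma exists_maxVar_eq {u : Mono n} (hu : u ≠ 0) : ∃ i : Fin n, maxVar u = (i : ℕ) + 1 := by
  have hne : u.support.Nonempty := Finsupp.support_nonempty_iff.mpr hu
  exact ⟨u.support.max' hne,
    maxVar_eq_iff.mpr ⟨u.support.max'_mem hne, fun j hj => u.support.le_max' j hj⟩⟩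

lemma single_le_of_maxVar_eq {u : Mono n} {i : Fin n} (h : maxVar u = (i : ℕ) + 1) :
    Finsupp.single i 1 ≤ u :=
  Finsupp.single_le_iff.mpr (Nat.one_le_iff_ne_zero.mpr
    (Finsupp.mem_support_iff.mp (maxVar_eq_iff.mp h).1))

lemma monomial_mem_of_le {I : Ideal (MvPolynomial (Fin n) K)} {v u : Mono n}
    (hv : monomial v (1 : K) ∈ I) (hle : v ≤ u) : monomial u (1 : K) ∈ I := by
  rw [← tsub_add_cancel_of_le hle, ← one_mul (1 : K), ← monomial_mul]
  exact I.mul_mem_left _ hv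

lemma restrictSupport_inf_restrictSupport {σ R : Type*} [CommSemiring R]
    (s t : Set (σ →₀ ℕ)) :
    restrictSupport R s ⊓ restrictSupport R t = restrictSupport R (s ∩ t) := by
  ext p
  simp only [Submodule.mem_inf, mem_restrictSupport_iff, Set.subset_inter_iff]

namespace MonomialIdeal

variable {I J : Ideal (MvPolynomial (Fin n) K)}

lemma restrictScalars_eq (hI : MonomialIdeal I) :
    I.restrictScalars K = restrictSupport K {m | monomial m (1 : K) ∈ I} := by
  refine le_antisymm (fun p hp m hm => hI p hp m hm) ?_
  rw [restrictSupport_eq_span, Submodule.span_le]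
  rintro _ ⟨m, hm, rfl⟩
  exact hm

lemma hComp_eq_restrictSupport (hI : MonomialIdeal I) (t : ℕ) :
    hComp I t = restrictSupport K (monSlice I t) := by
  rw [hComp, if_pos (Int.natCast_nonneg t), Int.toNat_natCast, hI.restrictScalars_eq,
    homogeneousSubmodule_eq_finsupp_supported, ← restrictSupport,
    restrictSupport_inf_restrictSupport, Set.inter_comm]
  rfl

lemma hfI_eq_ncard (hI : MonomialIdeal I) (t : ℕ) : hfI I t = (monSlice I t).ncard := by
  rw [hfI, hI.hComp_eq_restrictSupport, Module.finrank_eq_nat_card_basis (basisRestrictSupport K _),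
    Nat.card_coe_set_eq]

lemma eq_of_monSlice_eq (hI : MonomialIdeal I) (hJ : MonomialIdeal J)
    (h : ∀ t, monSlice I t = monSlice J t) : I = J := by
  refine Submodule.restrictScalars_injective K _ _ ?_
  rw [hI.restrictScalars_eq, hJ.restrictScalars_eq]
  congr 1
  ext m
  exact ⟨fun hm => (h (mdeg m) ▸ ⟨rfl, hm⟩ : m ∈ monSlice J (mdeg m)).2,
    fun hm => ((h (mdeg m)).symm ▸ ⟨rfl, hm⟩ : m ∈ monSlice I (mdeg m)).2⟩

end MonomialIdeal

lemma lexGT_iff_toLex_lt {u v : Mono n} : LexGT u v ↔ toLex v < toLex u := by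
  simp only [LT.lt, Finsupp.lex_def, LexGT, ofLex_toLex]
  exact exists_congr fun i => ⟨fun ⟨h1, h2⟩ => ⟨fun j hj => (h2 j hj).symm, h1⟩,
    fun ⟨h1, h2⟩ => ⟨h2, fun j hj => (h1 j hj).symm⟩⟩

lemma lexGT_or_lexGT_of_ne {u v : Mono n} (h : u ≠ v) : LexGT u v ∨ LexGT v u := by
  simp only [lexGT_iff_toLex_lt]
  exact (ne_iff_lt_or_gt.mp (toLex.injective.ne h)).symm

namespace LexSegIn

variable {k t : ℕ} {A B : Set (Mono n)}

lemma subset_of_mem_of_notMem (hA : LexSegIn k A) (hB : LexSegIn k B)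
    (hAt : ∀ u ∈ A, mdeg u = t) (hBt : ∀ u ∈ B, mdeg u = t)
    {u : Mono n} (huA : u ∈ A) (huB : u ∉ B) : B ⊆ A := by
  intro v hvB
  have hdeg : mdeg v = mdeg u := by rw [hAt u huA, hBt v hvB]
  rcases lexGT_or_lexGT_of_ne (ne_of_mem_of_not_mem hvB huB) with hvu | huv
  · exact hA.2 u huA v hdeg (hB.1 v hvB) hvu
  · exact absurd (hB.2 v hvB u hdeg.symm (hA.1 u huA) huv) huB

lemma eq_of_ncard_eq (hA : LexSegIn k A) (hB : LexSegIn k B)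
    (hAt : ∀ u ∈ A, mdeg u = t) (hBt : ∀ u ∈ B, mdeg u = t) (hcard : A.ncard = B.ncard) :
    A = B := by
  by_cases hAB : A ⊆ B
  · exact Set.eq_of_subset_of_ncard_le hAB hcard.ge (finite_of_forall_mdeg_eq hBt)
  · obtain ⟨u, huA, huB⟩ := Set.not_subset.mp hAB
    exact (Set.eq_of_subset_of_ncard_le (hA.subset_of_mem_of_notMem hB hAt hBt huA huB)
      hcard.le (finite_of_forall_mdeg_eq hAt)).symm

end LexSegIn

/-- `max(v) ≤ min(z)` in the paper's notation. -/
def SupportLE (v z : Mono n) : Prop := ∀ p ∈ v.support, ∀ j ∈ z.support, p ≤ j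

/-- The degree-`t` part of the monomial ideal generated by `V`. -/
def genSlice (V : Set (Mono n)) (t : ℕ) : Set (Mono n) := {u | mdeg u = t ∧ ∃ v ∈ V, v ≤ u}

lemma le_sub_single_of_lt {v u : Mono n} {m : Fin n} (hvu : v ≤ u) (hvm : v m < u m) :
    v ≤ u - Finsupp.single m 1 := by
  intro j
  have := hvu j
  rcases eq_or_ne m j with rfl | hne
  · simp only [Finsupp.tsub_apply, Finsupp.single_eq_same]; omega
  · simp only [Finsupp.tsub_apply, Finsupp.single_eq_of_ne' hne]; omega

namespace SStableSet

variable {V : Set (Mono n)} {d : ℕ}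

lemma exists_le_sub_single (hV : SStableSet V) (hVd : ∀ v ∈ V, mdeg v = d)
    {u v : Mono n} (hv : v ∈ V) (hvu : v ≤ u) (hdu : d < mdeg u) {m : Fin n}
    (hm : maxVar u = (m : ℕ) + 1) : ∃ v' ∈ V, v' ≤ u - Finsupp.single m 1 := by
  obtain ⟨hm_mem, hm_max⟩ := maxVar_eq_iff.mp hm
  have hum : 0 < u m := Nat.pos_of_ne_zero (Finsupp.mem_support_iff.mp hm_mem)
  obtain ⟨k, hk⟩ : ∃ k, v m = k := ⟨_, rfl⟩
  induction k generalizing v with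
  | zero => exact ⟨v, hv, le_sub_single_of_lt hvu (by omega)⟩
  | succ k ih =>
    by_cases hlt : v m < u m
    · exact ⟨v, hv, le_sub_single_of_lt hvu hlt⟩
    obtain ⟨p, hp⟩ : ∃ p, v p < u p := by
      by_contra! h
      have := mdeg_le_mdeg (fun p => h p : u ≤ v)
      have := hVd v hv
      omega
    have hpm : p < m := lt_of_le_of_ne
      (hm_max p (Finsupp.mem_support_iff.mpr (by omega))) (by rintro rfl; omega)
    -- move one factor `x_m` of `v` to `x_p`, which strong stability allows
    have hv' : v - Finsupp.single m 1 + Finsupp.single p 1 ∈ V :=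
      hV _ p m hpm (by rwa [tsub_add_cancel_of_le (Finsupp.single_le_iff.mpr (by omega))])
    refine ih hv' (fun j => ?_) ?_
    · have := hvu j
      simp only [Finsupp.add_apply, Finsupp.tsub_apply, Finsupp.single_apply]
      split_ifs <;> subst_vars <;> omega
    · simp only [Finsupp.add_apply, Finsupp.tsub_apply, Finsupp.single_eq_same,
        Finsupp.single_eq_of_ne' hpm.ne]
      omega

-- Eliahou–Kervaire decomposition
lemma exists_add_supportLE (hV : SStableSet V) (hVd : ∀ v ∈ V, mdeg v = d)
    {u : Mono n} (hu : ∃ v ∈ V, v ≤ u) : ∃ v ∈ V, ∃ z, u = v + z ∧ SupportLE v z := by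
  obtain ⟨s, hs⟩ : ∃ s, mdeg u = d + s := by
    obtain ⟨v, hv, hvu⟩ := hu
    exact ⟨mdeg u - d, by have := mdeg_le_mdeg hvu; rw [hVd v hv] at this; omega⟩
  induction s generalizing u with
  | zero =>
    obtain ⟨v, hv, hvu⟩ := hu
    have : v = u := by
      obtain ⟨w, rfl⟩ := exists_add_of_le hvu
      rw [mdeg_add, hVd v hv, Nat.add_zero, Nat.add_eq_left, mdeg_eq_degree,
        Finsupp.degree_eq_zero_iff] at hs
      rw [hs, add_zero]
    exact ⟨v, hv, 0, by rw [this, add_zero], by simp [SupportLE]⟩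
  | succ s ih =>
    obtain ⟨v₀, hv₀, hv₀u⟩ := hu
    obtain ⟨m, hm⟩ := exists_maxVar_eq (u := u) (by rintro rfl; simp [mdeg] at hs)
    have hmu := tsub_add_cancel_of_le (single_le_of_maxVar_eq hm)
    obtain ⟨v, hv, z, hvz, hsupp⟩ := ih (hV.exists_le_sub_single hVd hv₀ hv₀u (by omega) hm)
      (by have := congrArg mdeg hmu; rw [mdeg_add, mdeg_single] at this; omega)
    refine ⟨v, hv, z + Finsupp.single m 1, by rw [← add_assoc, ← hvz, hmu], ?_⟩
    intro p hp j hj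
    rcases Finset.mem_union.mp (Finsupp.support_add hj) with hj | hj
    · exact hsupp p hp j hj
    · rw [Finset.mem_singleton.mp (Finsupp.support_single_subset hj)]
      refine (maxVar_eq_iff.mp hm).2 p (Finsupp.support_mono ?_ hp)
      exact (le_add_right le_rfl).trans (hvz ▸ tsub_le_self)

end SStableSet

namespace SupportLE

variable {v z v' z' : Mono n}

lemma not_lexGT (hdeg : mdeg v = mdeg v') (h' : SupportLE v' z') (he : v + z = v' + z') :
    ¬ LexGT v v' := by
  rintro ⟨i, hlt, hpre⟩
  have hi : i ∈ z'.support := by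
    have := DFunLike.congr_fun he i
    simp only [Finsupp.add_apply] at this
    exact Finsupp.mem_support_iff.mpr (by omega)
  -- `v'` lives in the variables `≤ i`, where it is lex-smaller than `v`, hence of smaller degree
  have : mdeg v' < mdeg v := by
    rw [mdeg_eq_degree, mdeg_eq_degree, Finsupp.degree_eq_sum, Finsupp.degree_eq_sum]
    refine Finset.sum_lt_sum (fun j _ => ?_) ⟨i, Finset.mem_univ i, hlt⟩
    rcases lt_trichotomy j i with hj | rfl | hj
    · exact (hpre j hj).ge
    · exact hlt.le
    · have : j ∉ v'.support := fun hj' => (h' j hj' i hi).not_gt hj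
      rw [Finsupp.notMem_support_iff.mp this]
      exact Nat.zero_le _
  omega

lemma eq_of_add_eq (hdeg : mdeg v = mdeg v') (h : SupportLE v z) (h' : SupportLE v' z')
    (he : v + z = v' + z') : v = v' := by
  by_contra hne
  rcases lexGT_or_lexGT_of_ne hne with hlex | hlex
  · exact not_lexGT hdeg h' he hlex
  · exact not_lexGT hdeg.symm h he.symm hlex

end SupportLE

section Dk

variable {V W : Set (Mono n)} {d : ℕ} {i : Fin n}

lemma mdeg_of_mem_Dk (hVd : ∀ v ∈ V, mdeg v = d) {w : Mono n} (hw : w ∈ Dk V i) :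
    mdeg w = d - 1 := by
  have := hVd _ hw.1
  rw [mdeg_add, mdeg_single] at this
  omega

lemma sub_single_mem_Dk {u : Mono n} (hu : u ∈ V) (hm : maxVar u = (i : ℕ) + 1) :
    u - Finsupp.single i 1 ∈ Dk V i := by
  rw [Dk, Set.mem_ofPred_eq, tsub_add_cancel_of_le (single_le_of_maxVar_eq hm)]
  exact ⟨hu, hm⟩

lemma subset_of_forall_Dk_subset (hV : (0 : Mono n) ∉ V) (h : ∀ i, Dk V i ⊆ Dk W i) :
    V ⊆ W := by
  intro u hu
  obtain ⟨i, hi⟩ := exists_maxVar_eq (ne_of_mem_of_not_mem hu hV)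
  have := (h i (sub_single_mem_Dk hu hi)).1
  rwa [tsub_add_cancel_of_le (single_le_of_maxVar_eq hi)] at this

lemma eq_of_forall_Dk_eq (hV : (0 : Mono n) ∉ V) (hW : (0 : Mono n) ∉ W)
    (h : ∀ i, Dk V i = Dk W i) : V = W :=
  (subset_of_forall_Dk_subset hV fun i => (h i).subset).antisymm
    (subset_of_forall_Dk_subset hW fun i => (h i).symm.subset)

end Dk

lemma mem_finsuppAntidiag_Ici {i : Fin n} {s : ℕ} {z : Mono n} :
    z ∈ (Finset.Ici i).finsuppAntidiag s ↔ mdeg z = s ∧ ∀ j ∈ z.support, i ≤ j := by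
  rw [Finset.mem_finsuppAntidiag']
  simp only [mdeg, Finset.subset_iff, Finset.mem_Ici]

lemma card_finsuppAntidiag_Ici (i : Fin n) (s : ℕ) :
    ((Finset.Ici i).finsuppAntidiag s).card = (n - i).multichoose s := by
  rw [Finset.card_finsuppAntidiag_nat_eq_multichoose, Fin.card_Ici]

/-- Counting through the Eliahou–Kervaire decomposition `u = (w + eᵢ) + z`, with `w ∈ Dk V i`
and `z` of degree `s` supported on the variables `≥ i` (0-indexed, hence `n - i` of them). -/
lemma SStableSet.ncard_genSlice_add {V : Set (Mono n)} {d : ℕ} (hV : SStableSet V)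
    (hVd : ∀ v ∈ V, mdeg v = d) (hd : 0 < d) (s : ℕ) :
    (genSlice V (d + s)).ncard = ∑ i : Fin n, (Dk V i).ncard * (n - i).multichoose s := by
  classical
  let Φ : (Σ i : Fin n, Dk V i × (Finset.Ici i).finsuppAntidiag s) → genSlice V (d + s) :=
    fun x => ⟨(x.2.1 : Mono n) + Finsupp.single x.1 1 + (x.2.2 : Mono n), by
      obtain ⟨i, ⟨w, hw⟩, ⟨z, hz⟩⟩ := x
      refine ⟨?_, w + Finsupp.single i 1, hw.1, le_self_add⟩
      rw [mdeg_add, hVd _ hw.1, (mem_finsuppAntidiag_Ici.mp hz).1]⟩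
  have hsupp : ∀ x : Σ i : Fin n, Dk V i × (Finset.Ici i).finsuppAntidiag s,
      SupportLE ((x.2.1 : Mono n) + Finsupp.single x.1 1) (x.2.2 : Mono n) := by
    rintro ⟨i, ⟨w, hw⟩, ⟨z, hz⟩⟩ p hp j hj
    exact ((maxVar_eq_iff.mp hw.2).2 p hp).trans ((mem_finsuppAntidiag_Ici.mp hz).2 j hj)
  have hΦ : Function.Bijective Φ := by
    constructor
    · rintro ⟨i, ⟨w, hw⟩, ⟨z, hz⟩⟩ ⟨i', ⟨w', hw'⟩, ⟨z', hz'⟩⟩ he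
      have he : w + Finsupp.single i 1 + z = w' + Finsupp.single i' 1 + z' :=
        congrArg Subtype.val he
      have hv := SupportLE.eq_of_add_eq (by rw [hVd _ hw.1, hVd _ hw'.1])
        (hsupp ⟨i, ⟨w, hw⟩, ⟨z, hz⟩⟩) (hsupp ⟨i', ⟨w', hw'⟩, ⟨z', hz'⟩⟩) he
      obtain rfl : i = i' := Fin.ext (by have := hw.2; rw [hv, hw'.2] at this; omega)
      obtain rfl := add_right_cancel hv
      obtain rfl := add_left_cancel (hv ▸ he)
      rfl
    · rintro ⟨u, hu, hgen⟩
      obtain ⟨v, hv, z, rfl, hvz⟩ := hV.exists_add_supportLE hVd hgen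
      obtain ⟨i, hi⟩ := exists_maxVar_eq (u := v) (by rintro rfl; simp [mdeg, ← hVd 0 hv] at hd)
      have hz : z ∈ (Finset.Ici i).finsuppAntidiag s := by
        rw [mdeg_add, hVd v hv] at hu
        exact mem_finsuppAntidiag_Ici.mpr
          ⟨by omega, fun j hj => hvz i (maxVar_eq_iff.mp hi).1 j hj⟩
      refine ⟨⟨i, ⟨_, sub_single_mem_Dk hv hi⟩, ⟨z, hz⟩⟩, Subtype.ext ?_⟩
      exact congrArg (· + z) (tsub_add_cancel_of_le (single_le_of_maxVar_eq hi))
  have (i : Fin n) : Finite (Dk V i) :=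
    (finite_of_forall_mdeg_eq fun _ => mdeg_of_mem_Dk hVd).to_subtype
  rw [← Nat.card_coe_set_eq, ← Nat.card_congr (Equiv.ofBijective Φ hΦ), Nat.card_sigma]
  simp only [Nat.card_prod, Nat.card_coe_set_eq, Nat.card_eq_fintype_card, Fintype.card_coe,
    card_finsuppAntidiag_Ici]

lemma sum_mul_multichoose_succ (a : Fin (n + 1) → ℕ) (s : ℕ) :
    ∑ i, a i * (n + 1 - i).multichoose (s + 1) =
      ∑ i : Fin n, a i.castSucc * (n - i).multichoose (s + 1) +
        ∑ i, a i * (n + 1 - i).multichoose s := by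
  have hpascal (i : Fin n) : (n + 1 - i).multichoose (s + 1) =
      (n - i).multichoose (s + 1) + (n + 1 - i).multichoose s := by
    rw [show n + 1 - i = n - i + 1 by omega, Nat.multichoose_succ_succ]
  simp only [Fin.sum_univ_castSucc, Fin.val_castSucc, Fin.val_last, hpascal, mul_add,
    Finset.sum_add_distrib, Nat.add_sub_cancel_left, Nat.multichoose_one]
  ring

lemma eq_of_sum_mul_multichoose_eq {a b : Fin n → ℕ} (k : ℕ)
    (h : ∀ s, k ≤ s → ∑ i, a i * (n - i).multichoose s = ∑ i, b i * (n - i).multichoose s) :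
    a = b := by
  induction n generalizing k with
  | zero => exact funext fun i => i.elim0
  | succ n ih =>
    -- by Pascal's rule, the first differences in `s` only involve the coefficients at `i < n`
    have hinit : ∀ i, a (Fin.castSucc i) = b (Fin.castSucc i) :=
      congrFun <| ih (k + 1) fun s hs => by
        obtain ⟨s, rfl⟩ := Nat.exists_eq_add_of_le' (Nat.one_le_of_lt hs)
        have := sum_mul_multichoose_succ a s
        have := sum_mul_multichoose_succ b s
        have := h (s + 1) (by omega)
        have := h s (by omega)
        omega
    have hk := h k le_rfl
    simp only [Fin.sum_univ_castSucc, Fin.val_castSucc, Fin.val_last, Nat.add_sub_cancel_left,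
      Nat.multichoose_one, mul_one, hinit, Nat.add_left_cancel_iff] at hk
    funext i
    exact Fin.lastCases hk hinit i

lemma DLinearLexSeg.eq_of_ncard_Dk_eq {d : ℕ} {V W : Set (Mono n)} (hd : 0 < d)
    (hV : DLinearLexSeg d V) (hW : DLinearLexSeg d W)
    (h : ∀ i, (Dk V i).ncard = (Dk W i).ncard) : V = W := by
  have zero_notMem {U : Set (Mono n)} (hU : DLinearLexSeg d U) : (0 : Mono n) ∉ U :=
    fun h0 => by simp [mdeg, ← hU.1 0 h0] at hd
  exact eq_of_forall_Dk_eq (zero_notMem hV) (zero_notMem hW) fun i =>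
    (hV.2.2 i).eq_of_ncard_eq (hW.2.2 i) (fun _ => mdeg_of_mem_Dk hV.1)
      (fun _ => mdeg_of_mem_Dk hW.1) (h i)

lemma monSlice_eq_genSlice {d t : ℕ} {I : Ideal (MvPolynomial (Fin n) K)} (hdt : d ≤ t)
    (hgen : ∀ u : Mono n, d ≤ mdeg u → monomial u (1 : K) ∈ I → ∃ v ∈ monSlice I d, v ≤ u) :
    monSlice I t = genSlice (monSlice I d) t := by
  ext u
  refine ⟨fun hu => ⟨hu.1, hgen u (hu.1 ▸ hdt) hu.2⟩, ?_⟩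
  rintro ⟨hu, v, hv, hvu⟩
  exact ⟨hu, monomial_mem_of_le hv.2 hvu⟩

theorem stmt7_general (n d : ℕ) (hd : 0 < d) (K : Type) [Field K]
    (I J : Ideal (MvPolynomial (Fin n) K)) (hI : DLexIdeal d I) (hJ : DLexIdeal d J)
    (h : ∀ t : ℕ, hfI I t = hfI J t) : I = J := by
  obtain ⟨hIm, hIlin, hIgen, hIlow⟩ := hI
  obtain ⟨hJm, hJlin, hJgen, hJlow⟩ := hJ
  have hcard (t : ℕ) : (monSlice I t).ncard = (monSlice J t).ncard := by
    rw [← hIm.hfI_eq_ncard, ← hJm.hfI_eq_ncard, h]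
  have hgrowth (s : ℕ) :
      ∑ i : Fin n, (Dk (monSlice I d) i).ncard * (n - i).multichoose s =
        ∑ i : Fin n, (Dk (monSlice J d) i).ncard * (n - i).multichoose s := by
    rw [← hIlin.2.1.ncard_genSlice_add hIlin.1 hd, ← hJlin.2.1.ncard_genSlice_add hJlin.1 hd,
      ← monSlice_eq_genSlice le_self_add hIgen, ← monSlice_eq_genSlice le_self_add hJgen, hcard]
  have hgens : monSlice I d = monSlice J d := hIlin.eq_of_ncard_Dk_eq hd hJlin
    (congrFun (eq_of_sum_mul_multichoose_eq 0 fun s _ => hgrowth s))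
  refine hIm.eq_of_monSlice_eq hJm fun t => ?_
  rcases lt_or_ge t d with ht | ht
  · exact (hIlow t ht).eq_of_ncard_eq (hJlow t ht) (fun _ hu => hu.1) (fun _ hu => hu.1) (hcard t)
  · rw [monSlice_eq_genSlice ht hIgen, monSlice_eq_genSlice ht hJgen, hgens]

/-- two `d`-lexsegment ideals with the same Hilbert function coincide. -/
theorem stmt7 (n d : ℕ) (hn : 0 < n) (hd : 0 < d) (K : Type) [Field K]
    (I J : Ideal (MvPolynomial (Fin n) K)) (hI : DLexIdeal d I) (hJ : DLexIdeal d J)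
    (h : ∀ t : ℕ, hfI I t = hfI J t) : I = J :=
  stmt7_general n d hd K I J hI hJ h

end Paper
end
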